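/- Fix s ∈ ℂ and let R = ℂ[z₀,z₁,z₂]/(z₀z₁). Consider the sequence of maps 0 → R ⊕ R → (ℂ[z₀,z₂] ⊕ ℂ[z₀,z₂]) × (ℂ[z₁,z₂] ⊕ ℂ[z₁,z₂]) → ℂ[z₂] ⊕ ℂ[z₂] → 0, where the first map sends (f₀, f₂) to ((f₀(z₀,0,z₂), f₂(z₀,0,z₂)), (−f₀(0,z₁,z₂+s), f₂(0,z₁,z₂+s))) and the second map sends ((g₀,g₂),(h₁,h₂)) to (g₀(0,z₂) + h₁(0,z₂−s), g₂(0,z₂) − h₂(0,z₂−s)). Then this sequence is exact: the first map is injective, its image equals the kernel of the second map, and the second map is surjective. -/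

import Mathlib

noncomputable section LogOneFormsSequence

open MvPolynomial

/-- The coordinate ring `R = ℂ[z₀,z₁,z₂]/(z₀z₁)` of the étale-local model of the glued
surface. -/
abbrev Rnc : Type :=
  MvPolynomial (Fin 3) ℂ ⧸ Ideal.span {(X 0 * X 1 : MvPolynomial (Fin 3) ℂ)}

/-- Substitution `z₀ ↦ z₀, z₁ ↦ 0, z₂ ↦ z₂` into `ℂ[z₀,z₂]` (variables `0 = z₀`, `1 = z₂`). -/
def sb₀ : MvPolynomial (Fin 3) ℂ →ₐ[ℂ] MvPolynomial (Fin 2) ℂ :=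
  aeval ![X 0, 0, X 1]

/-- Substitution `z₀ ↦ 0, z₁ ↦ z₁, z₂ ↦ z₂ + s` into `ℂ[z₁,z₂]`
(variables `0 = z₁`, `1 = z₂`). -/
def sb₁ (s : ℂ) : MvPolynomial (Fin 3) ℂ →ₐ[ℂ] MvPolynomial (Fin 2) ℂ :=
  aeval ![0, X 0, X 1 + C s]

lemma sb₀_vanish :
    ∀ a ∈ Ideal.span {(X 0 * X 1 : MvPolynomial (Fin 3) ℂ)}, sb₀ a = 0 := by
  intro a ha
  obtain ⟨c, rfl⟩ := Ideal.mem_span_singleton.mp ha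
  simp [sb₀]

lemma sb₁_vanish (s : ℂ) :
    ∀ a ∈ Ideal.span {(X 0 * X 1 : MvPolynomial (Fin 3) ℂ)}, sb₁ s a = 0 := by
  intro a ha
  obtain ⟨c, rfl⟩ := Ideal.mem_span_singleton.mp ha
  simp [sb₁]

/-- `R → ℂ[z₀,z₂]`, `[f] ↦ f(z₀,0,z₂)`. -/
def q₀ : Rnc →ₗ[ℂ] MvPolynomial (Fin 2) ℂ :=
  (Ideal.Quotient.liftₐ _ sb₀ sb₀_vanish).toLinearMap

/-- `R → ℂ[z₁,z₂]`, `[f] ↦ f(0,z₁,z₂+s)`. -/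
def q₁ (s : ℂ) : Rnc →ₗ[ℂ] MvPolynomial (Fin 2) ℂ :=
  (Ideal.Quotient.liftₐ _ (sb₁ s) (sb₁_vanish s)).toLinearMap

/-- Evaluation `ℂ[z₀,z₂] → ℂ[z₂]`, `g ↦ g(0,z₂)`. -/
def ev₀ : MvPolynomial (Fin 2) ℂ →ₗ[ℂ] Polynomial ℂ :=
  (aeval ![0, Polynomial.X] : MvPolynomial (Fin 2) ℂ →ₐ[ℂ] Polynomial ℂ).toLinearMap

/-- Evaluation with a shift `ℂ[z₁,z₂] → ℂ[z₂]`, `h ↦ h(0,z₂−s)`. -/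
def ev₁ (s : ℂ) : MvPolynomial (Fin 2) ℂ →ₗ[ℂ] Polynomial ℂ :=
  (aeval ![0, Polynomial.X - Polynomial.C s] :
    MvPolynomial (Fin 2) ℂ →ₐ[ℂ] Polynomial ℂ).toLinearMap

/-- The first map `R ⊕ R → (ℂ[z₀,z₂] ⊕ ℂ[z₀,z₂]) × (ℂ[z₁,z₂] ⊕ ℂ[z₁,z₂])`,
`(f₀,f₂) ↦ ((f₀(z₀,0,z₂), f₂(z₀,0,z₂)), (−f₀(0,z₁,z₂+s), f₂(0,z₁,z₂+s)))`. -/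
def oneFormPullback (s : ℂ) :
    Rnc × Rnc →ₗ[ℂ]
      (MvPolynomial (Fin 2) ℂ × MvPolynomial (Fin 2) ℂ) ×
      (MvPolynomial (Fin 2) ℂ × MvPolynomial (Fin 2) ℂ) :=
  LinearMap.prod (LinearMap.prodMap q₀ q₀) (LinearMap.prodMap (-(q₁ s)) (q₁ s))

/-- The second map `(ℂ[z₀,z₂] ⊕ ℂ[z₀,z₂]) × (ℂ[z₁,z₂] ⊕ ℂ[z₁,z₂]) → ℂ[z₂] ⊕ ℂ[z₂]`,
`((g₀,g₂),(h₁,h₂)) ↦ (g₀(0,z₂) + h₁(0,z₂−s), g₂(0,z₂) − h₂(0,z₂−s))`. -/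
def oneFormDifference (s : ℂ) :
    (MvPolynomial (Fin 2) ℂ × MvPolynomial (Fin 2) ℂ) ×
      (MvPolynomial (Fin 2) ℂ × MvPolynomial (Fin 2) ℂ) →ₗ[ℂ]
      Polynomial ℂ × Polynomial ℂ :=
  LinearMap.prod
    (ev₀ ∘ₗ LinearMap.fst ℂ _ _ ∘ₗ LinearMap.fst ℂ _ _ +
      ev₁ s ∘ₗ LinearMap.fst ℂ _ _ ∘ₗ LinearMap.snd ℂ _ _)
    (ev₀ ∘ₗ LinearMap.snd ℂ _ _ ∘ₗ LinearMap.fst ℂ _ _ -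
      ev₁ s ∘ₗ LinearMap.snd ℂ _ _ ∘ₗ LinearMap.snd ℂ _ _)


-- ===== auxiliary material =====

private abbrev P3 := MvPolynomial (Fin 3) ℂ
private abbrev P2 := MvPolynomial (Fin 2) ℂ

private noncomputable def A023 : P3 →ₐ[ℂ] P3 := aeval ![X 0, 0, X 2]
private noncomputable def A012 : P3 →ₐ[ℂ] P3 := aeval ![0, X 1, X 2]

private lemma auxDvd1 (f : P3) : (X 1 : P3) ∣ f - A023 f := by
  induction f using MvPolynomial.induction_on with
  | C a => simp [A023]
  | add p q hp hq => rw [map_add]; have := dvd_add hp hq; convert this using 1; ring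
  | mul_X p i hp =>
    rw [map_mul]
    have h2 : (X 1 : P3) ∣ X i - A023 (X i) := by fin_cases i <;> simp [A023]
    have e : p * X i - A023 p * A023 (X i)
        = (p - A023 p) * X i + A023 p * (X i - A023 (X i)) := by ring
    rw [e]
    exact dvd_add (hp.mul_right _) (h2.mul_left _)

private lemma auxDvd0 (f : P3) : (X 0 : P3) ∣ f - A012 f := by
  induction f using MvPolynomial.induction_on with
  | C a => simp [A012]
  | add p q hp hq => rw [map_add]; have := dvd_add hp hq; convert this using 1; ring
  | mul_X p i hp =>
    rw [map_mul]
    have h2 : (X 0 : P3) ∣ X i - A012 (X i) := by fin_cases i <;> simp [A012]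
    have e : p * X i - A012 p * A012 (X i)
        = (p - A012 p) * X i + A012 p * (X i - A012 (X i)) := by ring
    rw [e]
    exact dvd_add (hp.mul_right _) (h2.mul_left _)

private lemma auxComp0 :
    (aeval ![(X 0 : P3), X 2] : P2 →ₐ[ℂ] P3).comp sb₀ = A023 := by
  apply algHom_ext; intro i; fin_cases i <;> simp [A023, sb₀]

private lemma auxComp1 (s : ℂ) :
    (aeval ![(X 1 : P3), X 2 - C s] : P2 →ₐ[ℂ] P3).comp (sb₁ s) = A012 := by
  apply algHom_ext; intro i; fin_cases i <;> simp [A012, sb₁]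

/-- If both substitutions kill `f`, then `f ∈ (z₀z₁)`. -/
private lemma auxKer (s : ℂ) (f : P3) (h0 : sb₀ f = 0) (h1 : sb₁ s f = 0) :
    f ∈ Ideal.span {(X 0 * X 1 : P3)} := by
  have hA : A023 f = 0 := by
    rw [← auxComp0]; simp [h0]
  obtain ⟨a, ha⟩ := auxDvd1 f
  rw [hA, sub_zero] at ha
  have h1a : sb₁ s a = 0 := by
    have : sb₁ s f = sb₁ s (X 1) * sb₁ s a := by rw [← map_mul, ← ha]
    rw [h1] at this
    have hx : sb₁ s (X 1) = X 0 := by simp [sb₁]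
    rw [hx] at this
    rcases mul_eq_zero.mp this.symm with h | h
    · exact absurd h (X_ne_zero 0)
    · exact h
  have hA' : A012 a = 0 := by
    rw [← auxComp1 s]; simp [h1a]
  obtain ⟨b, hb⟩ := auxDvd0 a
  rw [hA', sub_zero] at hb
  exact Ideal.mem_span_singleton.mpr ⟨b, by rw [ha, hb]; ring⟩

/-- Both composites to `ℂ[z₂]` agree. -/
private lemma auxEv (s : ℂ) (f : P3) :
    (aeval ![0, Polynomial.X] : P2 →ₐ[ℂ] Polynomial ℂ) (sb₀ f)
      = (aeval ![0, Polynomial.X - Polynomial.C s] : P2 →ₐ[ℂ] Polynomial ℂ) (sb₁ s f) := by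
  have h : ((aeval ![0, Polynomial.X] : P2 →ₐ[ℂ] Polynomial ℂ).comp sb₀)
      = ((aeval ![0, Polynomial.X - Polynomial.C s] : P2 →ₐ[ℂ] Polynomial ℂ).comp (sb₁ s)) := by
    apply algHom_ext; intro i; fin_cases i <;> simp [sb₀, sb₁, algebraMap_eq]
  exact AlgHom.congr_fun h f

private lemma auxSect (p : Polynomial ℂ) :
    (aeval ![0, Polynomial.X] : P2 →ₐ[ℂ] Polynomial ℂ) (Polynomial.aeval (X 1 : P2) p) = p := by
  rw [← Polynomial.aeval_algHom_apply]
  simp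

/-- Joint section for the two substitutions. -/
private lemma auxSurjPair (s : ℂ) (g h : P2)
    (hgh : (aeval ![0, Polynomial.X] : P2 →ₐ[ℂ] Polynomial ℂ) g
      = (aeval ![0, Polynomial.X - Polynomial.C s] : P2 →ₐ[ℂ] Polynomial ℂ) h) :
    ∃ f : P3, sb₀ f = g ∧ sb₁ s f = h := by
  refine ⟨aeval ![(X 0 : P3), X 2] g + aeval ![(X 1 : P3), X 2 - C s] h
    - Polynomial.aeval (X 2 : P3) ((aeval ![0, Polynomial.X] : P2 →ₐ[ℂ] Polynomial ℂ) g),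
    ?_, ?_⟩
  · have c1 : sb₀ (aeval ![(X 0 : P3), X 2] g) = g := by
      have : sb₀.comp (aeval ![(X 0 : P3), X 2] : P2 →ₐ[ℂ] P3) = AlgHom.id ℂ P2 := by
        apply algHom_ext; intro i; fin_cases i <;> simp [sb₀]
      exact AlgHom.congr_fun this g
    have c2 : sb₀ (aeval ![(X 1 : P3), X 2 - C s] h)
        = Polynomial.aeval (X 1 : P2)
            ((aeval ![0, Polynomial.X - Polynomial.C s] : P2 →ₐ[ℂ] Polynomial ℂ) h) := by
      have : sb₀.comp (aeval ![(X 1 : P3), X 2 - C s] : P2 →ₐ[ℂ] P3)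
          = (Polynomial.aeval (X 1 : P2)).comp
            (aeval ![0, Polynomial.X - Polynomial.C s] : P2 →ₐ[ℂ] Polynomial ℂ) := by
        apply algHom_ext; intro i
        fin_cases i <;> simp [sb₀, Polynomial.algebraMap_eq, algebraMap_eq]
      exact AlgHom.congr_fun this h
    have c3 : sb₀ (Polynomial.aeval (X 2 : P3) ((aeval ![0, Polynomial.X] : P2 →ₐ[ℂ] Polynomial ℂ) g))
        = Polynomial.aeval (X 1 : P2) ((aeval ![0, Polynomial.X] : P2 →ₐ[ℂ] Polynomial ℂ) g) := by
      rw [← Polynomial.aeval_algHom_apply]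
      congr 1
      simp [sb₀]
    rw [map_sub, map_add, c1, c2, c3, hgh]
    ring
  · have d1 : sb₁ s (aeval ![(X 0 : P3), X 2] g) = Polynomial.aeval (X 1 + C s : P2) ((aeval ![0, Polynomial.X] : P2 →ₐ[ℂ] Polynomial ℂ) g) := by
      have : (sb₁ s).comp (aeval ![(X 0 : P3), X 2] : P2 →ₐ[ℂ] P3)
          = (Polynomial.aeval (X 1 + C s : P2)).comp
            (aeval ![0, Polynomial.X] : P2 →ₐ[ℂ] Polynomial ℂ) := by
        apply algHom_ext; intro i
        fin_cases i <;> simp [sb₁, Polynomial.algebraMap_eq, algebraMap_eq]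
      exact AlgHom.congr_fun this g
    have d2 : sb₁ s (aeval ![(X 1 : P3), X 2 - C s] h) = h := by
      have : (sb₁ s).comp (aeval ![(X 1 : P3), X 2 - C s] : P2 →ₐ[ℂ] P3)
          = AlgHom.id ℂ P2 := by
        apply algHom_ext; intro i
        fin_cases i <;> simp [sb₁]
      exact AlgHom.congr_fun this h
    have d3 : sb₁ s (Polynomial.aeval (X 2 : P3) ((aeval ![0, Polynomial.X] : P2 →ₐ[ℂ] Polynomial ℂ) g))
        = Polynomial.aeval (X 1 + C s : P2) ((aeval ![0, Polynomial.X] : P2 →ₐ[ℂ] Polynomial ℂ) g) := by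
      rw [← Polynomial.aeval_algHom_apply]
      congr 1
      simp [sb₁]
    rw [map_sub, map_add, d1, d2, d3]
    ring

private lemma q₀_mk (f : P3) : q₀ (Ideal.Quotient.mk _ f) = sb₀ f := by
  simp [q₀, Ideal.Quotient.liftₐ_apply, Ideal.Quotient.lift_mk]
  exact Ideal.Quotient.lift_mk _ _ _

private lemma q₁_mk (s : ℂ) (f : P3) : q₁ s (Ideal.Quotient.mk _ f) = sb₁ s f := by
  simp [q₁, Ideal.Quotient.liftₐ_apply, Ideal.Quotient.lift_mk]
  exact Ideal.Quotient.lift_mk _ _ _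

/-- For every `s ∈ ℂ`, with `R = ℂ[z₀,z₁,z₂]/(z₀z₁)`, the sequence
`0 → R ⊕ R → (ℂ[z₀,z₂] ⊕ ℂ[z₀,z₂]) × (ℂ[z₁,z₂] ⊕ ℂ[z₁,z₂]) → ℂ[z₂] ⊕ ℂ[z₂] → 0`
(the étale-local form of `0 → Ω¹_{X/S₀} → ν_*Ω¹_{S̄/S₀} → j_*Ω¹_{D/S₀} → 0`) is exact:
the first map is injective, its image equals the kernel of the second map, and the second
map is surjective. -/
theorem log_one_forms_sequence_exact (s : ℂ) :
    Function.Injective (oneFormPullback s) ∧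
    LinearMap.range (oneFormPullback s) = LinearMap.ker (oneFormDifference s) ∧
    Function.Surjective (oneFormDifference s) := by
  refine ⟨?_, ?_, ?_⟩
  · rw [← LinearMap.ker_eq_bot, LinearMap.ker_eq_bot']
    rintro ⟨x, y⟩ hxy
    obtain ⟨f, rfl⟩ := Ideal.Quotient.mk_surjective x
    obtain ⟨g, rfl⟩ := Ideal.Quotient.mk_surjective y
    simp only [oneFormPullback, LinearMap.prod_apply, LinearMap.prodMap_apply, Function.prod,
      LinearMap.neg_apply, Prod.mk_eq_zero, neg_eq_zero, q₀_mk, q₁_mk] at hxy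
    obtain ⟨⟨h1, h2⟩, h3, h4⟩ := hxy
    refine Prod.ext ?_ ?_ <;> simp only []
    · exact Ideal.Quotient.eq_zero_iff_mem.mpr (auxKer s f h1 h3)
    · exact Ideal.Quotient.eq_zero_iff_mem.mpr (auxKer s g h2 h4)
  · apply le_antisymm
    · rintro _ ⟨⟨x, y⟩, rfl⟩
      obtain ⟨f, rfl⟩ := Ideal.Quotient.mk_surjective x
      obtain ⟨g, rfl⟩ := Ideal.Quotient.mk_surjective y
      simp only [LinearMap.mem_ker, oneFormPullback, oneFormDifference, LinearMap.prod_apply,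
        LinearMap.prodMap_apply, Function.prod, LinearMap.neg_apply, LinearMap.add_apply,
        LinearMap.sub_apply, LinearMap.comp_apply, LinearMap.fst_apply, LinearMap.snd_apply,
        q₀_mk, q₁_mk, Prod.mk_eq_zero, map_neg]
      have hf := auxEv s f
      have hg := auxEv s g
      simp only [ev₀, ev₁, AlgHom.toLinearMap_apply]
      constructor
      · rw [hf]; ring
      · rw [hg]; ring
    · rintro ⟨⟨g₀, g₂⟩, h₁, h₂⟩ hk
      simp only [LinearMap.mem_ker, oneFormDifference, LinearMap.prod_apply, Function.prod,
        LinearMap.add_apply, LinearMap.sub_apply, LinearMap.comp_apply, LinearMap.fst_apply,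
        LinearMap.snd_apply, Prod.mk_eq_zero] at hk
      obtain ⟨hk1, hk2⟩ := hk
      have e1 : (aeval ![0, Polynomial.X] : P2 →ₐ[ℂ] Polynomial ℂ) g₀
          = (aeval ![0, Polynomial.X - Polynomial.C s] : P2 →ₐ[ℂ] Polynomial ℂ) (-h₁) := by
        have : ev₀ g₀ = -(ev₁ s h₁) := by linear_combination hk1
        rw [map_neg]
        exact this
      have e2 : (aeval ![0, Polynomial.X] : P2 →ₐ[ℂ] Polynomial ℂ) g₂
          = (aeval ![0, Polynomial.X - Polynomial.C s] : P2 →ₐ[ℂ] Polynomial ℂ) h₂ := by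
        have : ev₀ g₂ = ev₁ s h₂ := by linear_combination hk2
        exact this
      obtain ⟨f₀, hf0, hf1⟩ := auxSurjPair s g₀ (-h₁) e1
      obtain ⟨f₂, hg0, hg1⟩ := auxSurjPair s g₂ h₂ e2
      refine ⟨(Ideal.Quotient.mk _ f₀, Ideal.Quotient.mk _ f₂), ?_⟩
      simp only [oneFormPullback, LinearMap.prod_apply, LinearMap.prodMap_apply, Function.prod,
        LinearMap.neg_apply, q₀_mk, q₁_mk, hf0, hf1, hg0, hg1, neg_neg]
  · rintro ⟨p, q⟩
    refine ⟨((Polynomial.aeval (X 1 : P2) p, Polynomial.aeval (X 1 : P2) q), 0, 0), ?_⟩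
    simp only [oneFormDifference, LinearMap.prod_apply, Function.prod, LinearMap.add_apply,
      LinearMap.sub_apply, LinearMap.comp_apply, LinearMap.fst_apply, LinearMap.snd_apply,
      map_zero, add_zero, sub_zero]
    exact Prod.ext (auxSect p) (auxSect q)


end LogOneFormsSequence
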